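/- Let G be a 3-connected graph and P a vertex-transitive finite connected graph. If G := P is 3-connected and has a totally-nested nontrivial tri-separation, then G has a totally-nested nontrivial tri-separation whose separator consists of three edges and one of whose sides induces a triangle (K3). (Consequently every vertex of G has degree three.) -/

import Mathlib

/-!
Since `(A, B)` is totally nested, it is nested with its image `(φ A, φ B)` under every
automorphism `φ`. Naming the sides so that `|A| ≤ |B|`, comparing cardinalities leaves two
possibilities: `φ` fixes both sides, or `φ A ⊆ B` and `A ⊆ φ B`. Either way no automorphism maps
a vertex of `A \ B` into `A ∩ B`, so by vertex-transitivity `A ∩ B = ∅` and the separator consists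
of three edges. Likewise no automorphism maps a vertex of `A` without neighbours in `B` to one
with such a neighbour, so every vertex of `A` is an end of one of the three separator edges.
Thus `|A| ≤ 3`, the cycle in `G[A]` is a triangle on `A`, and each of its vertices has two
neighbours in `A` and exactly one in `B`.
-/

namespace Paper

open SimpleGraph

variable {V : Type*} [Fintype V] [DecidableEq V]

/-- A graph is `k`-connected if it has more than `k` vertices and deleting
fewer than `k` vertices never disconnects it. -/
def KConnected {W : Type*} (k : ℕ) (H : SimpleGraph W) : Prop :=
  k < Nat.card W ∧ ∀ S : Set W, S.ncard < k → (H.induce Sᶜ).Connected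

/-- A mixed-separation of `G`: `A ∪ B = V(G)` and both `A \ B` and `B \ A` are nonempty. -/
def MixedSep (G : SimpleGraph V) (A B : Set V) : Prop :=
  A ∪ B = Set.univ ∧ (A \ B).Nonempty ∧ (B \ A).Nonempty

/-- The edges of the separator of `(A,B)`: the edges between `A \ B` and `B \ A`. -/
def sepEdges (G : SimpleGraph V) (A B : Set V) : Set (Sym2 V) :=
  {e | e ∈ G.edgeSet ∧ ∃ x ∈ A \ B, ∃ y ∈ B \ A, e = s(x, y)}

/-- The separator of `(A,B)`: the vertices of `A ∩ B` together with the
edges between `A \ B` and `B \ A`, viewed as a set in `V ⊕ Sym2 V`. -/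
def sepSet (G : SimpleGraph V) (A B : Set V) : Set (V ⊕ Sym2 V) :=
  (Sum.inl '' (A ∩ B)) ∪ (Sum.inr '' sepEdges G A B)

/-- The order of a mixed-separation: the size of its separator. -/
noncomputable def sepOrder (G : SimpleGraph V) (A B : Set V) : ℕ :=
  (sepSet G A B).ncard

/-- A mixed `k`-separation. -/
def MixedKSep (G : SimpleGraph V) (k : ℕ) (A B : Set V) : Prop :=
  MixedSep G A B ∧ sepOrder G A B = k

/-- A tri-separation: a mixed 3-separation such that every vertex of `A ∩ B`
has at least two neighbours in both `G[A]` and `G[B]`. -/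
def TriSep (G : SimpleGraph V) (A B : Set V) : Prop :=
  MixedKSep G 3 A B ∧
    ∀ v ∈ A ∩ B, 2 ≤ (G.neighborSet v ∩ A).ncard ∧ 2 ≤ (G.neighborSet v ∩ B).ncard

/-- Two mixed-separations are nested if, after possibly swapping the names of
the sides of either one, `A ⊆ C` and `B ⊇ D`. -/
def Nested (A B C D : Set V) : Prop :=
  (A ⊆ C ∧ D ⊆ B) ∨ (A ⊆ D ∧ C ⊆ B) ∨ (B ⊆ C ∧ D ⊆ A) ∨ (B ⊆ D ∧ C ⊆ A)

/-- The induced subgraph `G[A]` contains a cycle. -/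
def HasCycleIn (G : SimpleGraph V) (A : Set V) : Prop :=
  ∃ (u : V) (p : G.Walk u u), p.IsCycle ∧ ∀ x ∈ p.support, x ∈ A

/-- A mixed 3-separation is nontrivial if both sides induce a subgraph containing a cycle. -/
def NontrivialSep (G : SimpleGraph V) (A B : Set V) : Prop :=
  HasCycleIn G A ∧ HasCycleIn G B

/-- A mixed-separation is strong if every vertex in its separator has degree at least 4. -/
def StrongSep (G : SimpleGraph V) (A B : Set V) : Prop :=
  ∀ v ∈ A ∩ B, 4 ≤ (G.neighborSet v).ncard

/-- A tri-separation is totally nested if it is nested with every tri-separation of `G`. -/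
def TotallyNested (G : SimpleGraph V) (A B : Set V) : Prop :=
  ∀ C D : Set V, TriSep G C D → Nested A B C D

/-- A trivial tri-separation: its sides are the sides `{v}` and `V \ {v}` of an
atomic cut at a degree-3 vertex `v`. -/
def TrivialSep (G : SimpleGraph V) (A B : Set V) : Prop :=
  ∃ v : V, (G.neighborSet v).ncard = 3 ∧
    ((A = {v} ∧ B = {v}ᶜ) ∨ (B = {v} ∧ A = {v}ᶜ))

/-- Diagonal edges of the crossing-diagram of `(A,B)` and `(C,D)`:
edges whose endvertices lie in opposite corners. -/
def diagEdges (G : SimpleGraph V) (A B C D : Set V) : Set (Sym2 V) :=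
  {e | e ∈ G.edgeSet ∧ ∃ x y, e = s(x, y) ∧
    ((x ∈ (A \ B) ∩ (C \ D) ∧ y ∈ (B \ A) ∩ (D \ C)) ∨
     (x ∈ (A \ B) ∩ (D \ C) ∧ y ∈ (B \ A) ∩ (C \ D)))}

/-- The centre of the crossing-diagram: `A ∩ B ∩ C ∩ D` together with the diagonal edges. -/
def centre (G : SimpleGraph V) (A B C D : Set V) : Set (V ⊕ Sym2 V) :=
  (Sum.inl '' (A ∩ B ∩ C ∩ D)) ∪ (Sum.inr '' diagEdges G A B C D)

/-- The link for the side `C` in the crossing-diagram of `(A,B)` and `(C,D)`: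
the vertices `(A ∩ B) \ D` together with the non-diagonal edges of the separator
of `(A,B)` having an endvertex in a corner for `C`. -/
def link (G : SimpleGraph V) (A B C D : Set V) : Set (V ⊕ Sym2 V) :=
  (Sum.inl '' ((A ∩ B) \ D)) ∪
    (Sum.inr '' {e | e ∈ sepEdges G A B ∧ e ∉ diagEdges G A B C D ∧ ∃ x ∈ e, x ∈ C \ D})

/-- The corner-separator at the corner for `{A,C}`: the union of the links for `A`
and for `C` together with the centre, minus the diagonal edges without an
endvertex in the corner for `{A,C}`. -/
def cornerSep (G : SimpleGraph V) (A B C D : Set V) : Set (V ⊕ Sym2 V) :=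
  link G C D A B ∪ link G A B C D ∪ (Sum.inl '' (A ∩ B ∩ C ∩ D)) ∪
    (Sum.inr '' {e | e ∈ diagEdges G A B C D ∧ ∃ x ∈ e, x ∈ (A \ B) ∩ (C \ D)})

/-- Jumping edges: edges joining vertices of two opposite links. -/
def jumpEdges (G : SimpleGraph V) (A B C D : Set V) : Set (Sym2 V) :=
  {e | e ∈ G.edgeSet ∧ ∃ x y, e = s(x, y) ∧
    ((x ∈ (A ∩ B) \ D ∧ y ∈ (A ∩ B) \ C) ∨ (x ∈ (C ∩ D) \ B ∧ y ∈ (C ∩ D) \ A))}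

/-- A 2-separation: a separation of order two with no edges in its separator. -/
def TwoSep (G : SimpleGraph V) (A B : Set V) : Prop :=
  A ∪ B = Set.univ ∧ (A \ B).Nonempty ∧ (B \ A).Nonempty ∧
    (A ∩ B).ncard = 2 ∧ sepEdges G A B = ∅

/-- `K` is (the vertex set of) a connected component of `G - S`. -/
def IsCompOf (G : SimpleGraph V) (S K : Set V) : Prop :=
  ∃ c : (G.induce Sᶜ).ConnectedComponent, K = Subtype.val '' c.supp

section

variable {V W : Type*} {G : SimpleGraph V} {G' : SimpleGraph W}

lemma sepEdges_comm (A B : Set V) : sepEdges G B A = sepEdges G A B := by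
  ext e
  constructor <;>
  · rintro ⟨he, x, hx, y, hy, rfl⟩
    exact ⟨he, y, hy, x, hx, Sym2.eq_swap⟩

lemma TriSep.symm {A B : Set V} (h : TriSep G A B) : TriSep G B A := by
  obtain ⟨⟨⟨hU, hAB, hBA⟩, hord⟩, hdeg⟩ := h
  refine ⟨⟨⟨Set.union_comm A B ▸ hU, hBA, hAB⟩, ?_⟩, fun v hv => (hdeg v ⟨hv.2, hv.1⟩).symm⟩
  rwa [sepOrder, sepSet, sepEdges_comm, Set.inter_comm]

lemma NontrivialSep.symm {A B : Set V} (h : NontrivialSep G A B) : NontrivialSep G B A :=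
  ⟨h.2, h.1⟩

lemma TotallyNested.symm {A B : Set V} (h : TotallyNested G A B) : TotallyNested G B A := by
  intro C D hCD
  have := h C D hCD
  unfold Nested at this ⊢
  tauto

lemma sepEdges_image (φ : G ≃g G') (A B : Set V) :
    sepEdges G' (φ '' A) (φ '' B) = Sym2.map φ '' sepEdges G A B := by
  ext e
  simp only [sepEdges, ← Set.image_sdiff φ.injective]
  constructor
  · rintro ⟨he, _, ⟨x, hx, rfl⟩, _, ⟨y, hy, rfl⟩, rfl⟩
    exact ⟨s(x, y), ⟨φ.map_adj_iff.1 he, x, hx, y, hy, rfl⟩, rfl⟩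
  · rintro ⟨_, ⟨he, x, hx, y, hy, rfl⟩, rfl⟩
    exact ⟨φ.map_adj_iff.2 he, φ x, ⟨x, hx, rfl⟩, φ y, ⟨y, hy, rfl⟩, rfl⟩

lemma sepOrder_image (φ : G ≃g G') (A B : Set V) :
    sepOrder G' (φ '' A) (φ '' B) = sepOrder G A B := by
  have h : sepSet G' (φ '' A) (φ '' B) = Sum.map φ (Sym2.map φ) '' sepSet G A B := by
    simp only [sepSet, sepEdges_image, ← Set.image_inter φ.injective, Set.image_union,
      Set.image_image, Sum.map_inl, Sum.map_inr]
  rw [sepOrder, sepOrder, h,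
    Set.ncard_image_of_injective _ (φ.injective.sumMap (Sym2.map.injective φ.injective))]

lemma ncard_neighborSet_inter_image (φ : G ≃g G') (v : V) (A : Set V) :
    (G'.neighborSet (φ v) ∩ φ '' A).ncard = (G.neighborSet v ∩ A).ncard := by
  rw [← φ.image_neighborSet, ← Set.image_inter φ.injective,
    Set.ncard_image_of_injective _ φ.injective]

lemma ncard_neighborSet_iso (φ : G ≃g G') (v : V) :
    (G'.neighborSet (φ v)).ncard = (G.neighborSet v).ncard := by
  rw [← φ.image_neighborSet, Set.ncard_image_of_injective _ φ.injective]

lemma TriSep.image {A B : Set V} (h : TriSep G A B) (φ : G ≃g G') :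
    TriSep G' (φ '' A) (φ '' B) := by
  obtain ⟨⟨⟨hU, hAB, hBA⟩, hord⟩, hdeg⟩ := h
  refine ⟨⟨⟨?_, ?_, ?_⟩, sepOrder_image φ A B ▸ hord⟩, ?_⟩
  · rw [← Set.image_union, hU, Set.image_univ_of_surjective φ.surjective]
  · exact Set.image_sdiff φ.injective A B ▸ hAB.image φ
  · exact Set.image_sdiff φ.injective B A ▸ hBA.image φ
  · rintro _ ⟨⟨v, hvA, rfl⟩, hvB⟩
    rw [ncard_neighborSet_inter_image, ncard_neighborSet_inter_image]
    exact hdeg v ⟨hvA, φ.injective.mem_set_image.1 hvB⟩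

lemma TriSep.ncard_sepEdges_compl {A : Set V} (hT : TriSep G A Aᶜ) :
    (sepEdges G A Aᶜ).ncard = 3 := by
  have h := hT.1.2
  rwa [sepOrder, sepSet, Set.inter_compl_self, Set.image_empty, Set.empty_union,
    Set.ncard_image_of_injective _ Sum.inr_injective] at h

def crossArcs (G : SimpleGraph V) (A : Set V) : Set (V × V) :=
  {p | p.1 ∈ A ∧ p.2 ∉ A ∧ G.Adj p.1 p.2}

lemma sepEdges_compl_eq_image_crossArcs (A : Set V) :
    sepEdges G A Aᶜ = (fun p => s(p.1, p.2)) '' crossArcs G A := by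
  ext e
  constructor
  · rintro ⟨he, x, ⟨hx, -⟩, y, ⟨hy, -⟩, rfl⟩
    exact ⟨(x, y), ⟨hx, hy, he⟩, rfl⟩
  · rintro ⟨⟨x, y⟩, ⟨hx, hy, hxy⟩, rfl⟩
    exact ⟨hxy, x, ⟨hx, fun h => h hx⟩, y, ⟨hy, hy⟩, rfl⟩

lemma ncard_sepEdges_compl (A : Set V) :
    (sepEdges G A Aᶜ).ncard = (crossArcs G A).ncard := by
  rw [sepEdges_compl_eq_image_crossArcs]
  refine Set.InjOn.ncard_image ?_
  rintro ⟨x, y⟩ ⟨hx, hy, -⟩ ⟨x', y'⟩ ⟨hx', hy', -⟩ h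
  rcases Sym2.eq_iff.1 h with ⟨rfl, rfl⟩ | ⟨rfl, rfl⟩
  · rfl
  · exact absurd hx hy'

lemma image_fst_crossArcs {A : Set V} (h : ∀ a ∈ A, ∃ y ∉ A, G.Adj a y) :
    Prod.fst '' crossArcs G A = A := by
  refine (Set.image_subset_iff.2 fun p hp => hp.1).antisymm fun a ha => ?_
  obtain ⟨y, hy, hay⟩ := h a ha
  exact ⟨(a, y), ⟨ha, hy, hay⟩, rfl⟩

end

section

variable {V : Type*} [Finite V] {G : SimpleGraph V}

lemma _root_.SimpleGraph.Walk.IsCycle.length_le_ncard {u : V} {p : G.Walk u u} (hp : p.IsCycle)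
    {A : Set V} (hA : ∀ x ∈ p.support, x ∈ A) : p.length ≤ A.ncard := by
  classical
  have hsub : (p.support.tail.toFinset : Set V) ⊆ A := fun x hx =>
    hA x (List.mem_of_mem_tail (by simpa using hx))
  calc p.length = p.support.tail.toFinset.card := by
        rw [List.toFinset_card_of_nodup hp.support_nodup, List.length_tail, p.length_support,
          Nat.add_sub_cancel]
    _ = (p.support.tail.toFinset : Set V).ncard := (Set.ncard_coe_finset _).symm
    _ ≤ A.ncard := Set.ncard_le_ncard hsub

lemma HasCycleIn.three_le_ncard {A : Set V} (h : HasCycleIn G A) : 3 ≤ A.ncard := by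
  obtain ⟨u, p, hp, hpA⟩ := h
  exact hp.three_le_length.trans (hp.length_le_ncard hpA)

lemma HasCycleIn.exists_triangle {A : Set V} (h : HasCycleIn G A) (hA : A.ncard ≤ 3) :
    ∃ a b c : V, a ≠ b ∧ a ≠ c ∧ b ≠ c ∧ A = {a, b, c} ∧
      G.Adj a b ∧ G.Adj a c ∧ G.Adj b c := by
  obtain ⟨u, p, hp, hpA⟩ := h
  have hlen : p.length = 3 := le_antisymm ((hp.length_le_ncard hpA).trans hA) hp.three_le_length
  rcases p with _ | ⟨hua, _ | ⟨hab, _ | ⟨hbu, _ | ⟨_, _⟩⟩⟩⟩ <;>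
    simp only [Walk.length_cons, Walk.length_nil] at hlen <;> try omega
  rename_i a b
  obtain ⟨⟨hab', hau⟩, hbu'⟩ : (a ≠ b ∧ a ≠ u) ∧ b ≠ u := by simpa using hp.support_nodup
  have hsub : {u, a, b} ⊆ A := by
    rintro x (rfl | rfl | rfl) <;> exact hpA _ (by simp)
  have h3 : ({u, a, b} : Set V).ncard = 3 :=
    Set.ncard_eq_three.2 ⟨u, a, b, hau.symm, hbu'.symm, hab', rfl⟩
  exact ⟨u, a, b, hau.symm, hbu'.symm, hab',
    (Set.eq_of_subset_of_ncard_le hsub (hA.trans h3.ge)).symm, hua, hbu.symm, hab⟩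

lemma ncard_le_ncard_sepEdges_compl {A : Set V} (h : ∀ a ∈ A, ∃ y ∉ A, G.Adj a y) :
    A.ncard ≤ (sepEdges G A Aᶜ).ncard := by
  calc A.ncard = (Prod.fst '' crossArcs G A).ncard := by rw [image_fst_crossArcs h]
    _ ≤ (crossArcs G A).ncard := Set.ncard_image_le (Set.toFinite _)
    _ = (sepEdges G A Aᶜ).ncard := (ncard_sepEdges_compl A).symm

lemma ncard_neighborSet_diff_eq_one {A : Set V} (h : ∀ a ∈ A, ∃ y ∉ A, G.Adj a y)
    (hA : (sepEdges G A Aᶜ).ncard ≤ A.ncard) {a : V} (ha : a ∈ A) :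
    (G.neighborSet a \ A).ncard = 1 := by
  have hinj : Set.InjOn Prod.fst (crossArcs G A) := by
    refine Set.injOn_of_ncard_image_eq ((Set.ncard_image_le (Set.toFinite _)).antisymm ?_)
    rwa [image_fst_crossArcs h, ← ncard_sepEdges_compl]
  obtain ⟨y, hy, hay⟩ := h a ha
  refine Set.ncard_eq_one.2 ⟨y, Set.eq_singleton_iff_unique_mem.2 ⟨⟨hay, hy⟩, ?_⟩⟩
  rintro z ⟨haz, hz⟩
  exact congrArg Prod.snd
    (hinj (show (a, z) ∈ crossArcs G A from ⟨ha, hz, haz⟩)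
      (show (a, y) ∈ crossArcs G A from ⟨ha, hy, hay⟩) rfl)

lemma TotallyNested.image_cases {A B : Set V} (hT : TriSep G A B) (hTN : TotallyNested G A B)
    (hAB : A.ncard ≤ B.ncard) (φ : G ≃g G) :
    (φ '' A = A ∧ φ '' B = B) ∨ (A ⊆ φ '' B ∧ φ '' A ⊆ B) := by
  have hA : (φ '' A).ncard = A.ncard := Set.ncard_image_of_injective A φ.injective
  have hB : (φ '' B).ncard = B.ncard := Set.ncard_image_of_injective B φ.injective
  rcases hTN _ _ (hT.image φ) with ⟨hAφA, hφBB⟩ | h | ⟨hBφA, hφBA⟩ | ⟨hBφB, hφAA⟩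
  · exact .inl ⟨(Set.eq_of_subset_of_ncard_le hAφA hA.le).symm,
      Set.eq_of_subset_of_ncard_le hφBB hB.ge⟩
  · exact .inr h
  · -- with `|A| ≤ |B|` both inclusions are equalities, so `φ` swaps the sides
    have hφA : B = φ '' A := Set.eq_of_subset_of_ncard_le hBφA (hA.trans_le hAB)
    have hφB : φ '' B = A := Set.eq_of_subset_of_ncard_le hφBA (hAB.trans_eq hB.symm)
    exact .inr ⟨hφB.ge, hφA.ge⟩
  · exact .inl ⟨Set.eq_of_subset_of_ncard_le hφAA hA.ge,
      (Set.eq_of_subset_of_ncard_le hBφB hB.le).symm⟩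

lemma TotallyNested.inter_eq_empty (hvt : ∀ u v : V, ∃ φ : G ≃g G, φ u = v) {A B : Set V}
    (hT : TriSep G A B) (hTN : TotallyNested G A B) (hAB : A.ncard ≤ B.ncard) :
    A ∩ B = ∅ := by
  refine Set.eq_empty_of_forall_notMem fun v hv => ?_
  obtain ⟨u, huA, huB⟩ := hT.1.1.2.1
  obtain ⟨φ, rfl⟩ := hvt u v
  have hvB : φ u ∈ φ '' B := by
    rcases hTN.image_cases hT hAB φ with ⟨-, hB⟩ | ⟨hA, -⟩
    · rw [hB]; exact hv.2
    · exact hA hv.1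
  exact huB (φ.injective.mem_set_image.1 hvB)

lemma TotallyNested.exists_adj_compl (hvt : ∀ u v : V, ∃ φ : G ≃g G, φ u = v) {A : Set V}
    (hT : TriSep G A Aᶜ) (hTN : TotallyNested G A Aᶜ) (hAc : A.ncard ≤ Aᶜ.ncard) :
    ∀ w ∈ A, ∃ y ∉ A, G.Adj w y := by
  obtain ⟨_, ⟨hxy, x, hx, y, hy, rfl⟩⟩ : (sepEdges G A Aᶜ).Nonempty := by
    rw [← Set.ncard_pos, hT.ncard_sepEdges_compl]
    norm_num
  intro w hw
  by_contra! hw'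
  have hwA : G.neighborSet w ⊆ A := fun z hz => by_contra fun hzA => hw' z hzA hz
  obtain ⟨φ, hφ⟩ := hvt w x
  rcases hTN.image_cases hT hAc φ with ⟨hφA, -⟩ | ⟨-, hφA⟩
  · have hNx : G.neighborSet x ⊆ A := by
      rw [← hφ, ← φ.image_neighborSet, ← hφA]
      exact Set.image_mono hwA
    exact hy.1 (hNx hxy)
  · exact hφA ⟨w, hw, hφ⟩ hx.1

theorem TotallyNested.exists_triangle_side (hvt : ∀ u v : V, ∃ φ : G ≃g G, φ u = v)
    {A B : Set V} (hT : TriSep G A B) (hN : NontrivialSep G A B) (hTN : TotallyNested G A B) (hAB : A.ncard ≤ B.ncard) :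
    A ∩ B = ∅ ∧ (sepEdges G A B).ncard = 3 ∧
      (∃ a b c : V, a ≠ b ∧ a ≠ c ∧ b ≠ c ∧ A = {a, b, c} ∧
        G.Adj a b ∧ G.Adj a c ∧ G.Adj b c) ∧
      ∀ v : V, (G.neighborSet v).ncard = 3 := by
  have hAB' : A ∩ B = ∅ := hTN.inter_eq_empty hvt hT hAB
  obtain rfl : B = Aᶜ := (compl_unique hAB' hT.1.1.1).symm
  have hsep := hT.ncard_sepEdges_compl
  have hadj := hTN.exists_adj_compl hvt hT hAB
  have hA : A.ncard = 3 :=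
    (hsep ▸ ncard_le_ncard_sepEdges_compl hadj).antisymm hN.1.three_le_ncard
  obtain ⟨a, b, c, hab, hac, hbc, hAabc, hGab, hGac, hGbc⟩ := hN.1.exists_triangle hA.le
  have hNa : G.neighborSet a ∩ A = {b, c} := by
    ext x
    simp only [hAabc, Set.mem_inter_iff, mem_neighborSet, Set.mem_insert_iff,
      Set.mem_singleton_iff]
    grind [G.irrefl]
  have hdeg : (G.neighborSet a).ncard = 3 := by
    rw [← Set.ncard_inter_add_ncard_sdiff_eq_ncard _ A, hNa, Set.ncard_pair hbc,
      ncard_neighborSet_diff_eq_one hadj (hsep.trans hA.symm).le (by simp [hAabc])]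
  refine ⟨hAB', hsep, ⟨a, b, c, hab, hac, hbc, hAabc, hGab, hGac, hGbc⟩, fun v => ?_⟩
  obtain ⟨φ, rfl⟩ := hvt a v
  rw [ncard_neighborSet_iso, hdeg]

end

theorem stmt15_general (G : SimpleGraph V)
    (hvt : ∀ u v : V, ∃ φ : G ≃g G, φ u = v)
    (h : ∃ A B : Set V, TriSep G A B ∧ NontrivialSep G A B ∧ TotallyNested G A B) :
    (∃ A B : Set V, TriSep G A B ∧ NontrivialSep G A B ∧ TotallyNested G A B ∧
        A ∩ B = ∅ ∧ (sepEdges G A B).ncard = 3 ∧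
        ∃ a b c : V, a ≠ b ∧ a ≠ c ∧ b ≠ c ∧ A = {a, b, c} ∧
          G.Adj a b ∧ G.Adj a c ∧ G.Adj b c) ∧
      ∀ v : V, (G.neighborSet v).ncard = 3 := by
  obtain ⟨A, B, hT, hN, hTN⟩ := h
  rcases le_total A.ncard B.ncard with hAB | hBA
  · obtain ⟨hS, hsep, htri, hdeg⟩ := hTN.exists_triangle_side hvt hT hN hAB
    exact ⟨⟨A, B, hT, hN, hTN, hS, hsep, htri⟩, hdeg⟩
  · obtain ⟨hS, hsep, htri, hdeg⟩ := hTN.symm.exists_triangle_side hvt hT.symm hN.symm hBA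
    exact ⟨⟨B, A, hT.symm, hN.symm, hTN.symm, hS, hsep, htri⟩, hdeg⟩

/-- A 3-connected vertex-transitive finite connected graph with a
totally-nested nontrivial tri-separation has one whose separator consists of
three edges and one of whose sides induces a triangle; consequently every
vertex has degree three. -/
theorem stmt15 (G : SimpleGraph V) (hconn : G.Connected)
    (hvt : ∀ u v : V, ∃ φ : G ≃g G, φ u = v)
    (h3 : KConnected 3 G)
    (h : ∃ A B : Set V, TriSep G A B ∧ NontrivialSep G A B ∧ TotallyNested G A B) :
    (∃ A B : Set V, TriSep G A B ∧ NontrivialSep G A B ∧ TotallyNested G A B ∧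
        A ∩ B = ∅ ∧ (sepEdges G A B).ncard = 3 ∧
        ∃ a b c : V, a ≠ b ∧ a ≠ c ∧ b ≠ c ∧ A = {a, b, c} ∧
          G.Adj a b ∧ G.Adj a c ∧ G.Adj b c) ∧
      ∀ v : V, (G.neighborSet v).ncard = 3 :=
  stmt15_general G hvt h

end Paper
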